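/- arXiv:2102.00083 — 2 statements merged into one kernel-verified Lean document; each statement's English description precedes it below -/
import Mathlib

section
/- POD optimality in terms of eigenvalues: let C be the empirical covariance operator of snapshots s⁽¹⁾,…,s⁽ᴷ⁾ in a separable Hilbert space X, with orthonormal eigenbasis {ψᵢ} and eigenvalues λ₁ ≥ λ₂ ≥ …. Then for any orthonormal family φ₁,…,φ_r in X, Σ_k ‖s⁽ᵏ⁾ − Σ_{l≤r} ⟨s⁽ᵏ⁾,φ_l⟩ φ_l‖² ≥ Σ_{i>r} λᵢ, with equality when φ_l = ψ_l for l = 1,…,r. -/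
open scoped RealInnerProductSpace

/-!
The error of an orthonormal family `φ` is `∑ ‖s k‖² - ∑ l ⟪C φ_l, φ_l⟫`. Expanding in the
eigenbasis, `∑ l ⟪C φ_l, φ_l⟫ = ∑ i λ_i t_i` with weights `t_i = ∑ l ⟪φ_l, ψ_i⟫²` in `[0, 1]`
(Bessel) of total mass `r` (Parseval), and such a weighted sum of a non-increasing sequence is at
most `λ_0 + ⋯ + λ_{r-1}`. Since the trace `∑ i λ_i` equals `∑ ‖s k‖²`, this is the tail bound.
-/

open Finset

theorem hasSum_mul_le_sum_range_of_antitone {lam t : ℕ → ℝ} {a : ℝ} {r : ℕ}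
    (hlam : Antitone lam) (ht0 : ∀ i, 0 ≤ t i) (ht1 : ∀ i, t i ≤ 1) (ht : HasSum t r)
    (hlt : HasSum (fun i => lam i * t i) a) :
    a ≤ ∑ i ∈ range r, lam i := by
  set u : ℕ → ℝ := fun i => if i < r then 1 else 0
  have hu_zero : ∀ i ∉ range r, u i = 0 := fun i hi => if_neg (by simpa using hi)
  have hu_range : ∀ i ∈ range r, u i = 1 := fun i hi => if_pos (mem_range.1 hi)
  have hu : HasSum u r := by
    have : HasSum u (∑ i ∈ range r, u i) := hasSum_sum_of_ne_finset_zero hu_zero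
    rwa [sum_congr rfl hu_range, sum_const, card_range, nsmul_one] at this
  have hlu : HasSum (fun i => lam i * u i) (∑ i ∈ range r, lam i) := by
    have : HasSum (fun i => lam i * u i) (∑ i ∈ range r, lam i * u i) :=
      hasSum_sum_of_ne_finset_zero fun i hi => by simp only [hu_zero i hi, mul_zero]
    rwa [sum_congr rfl fun i hi => by rw [hu_range i hi, mul_one]] at this
  -- Comparing with the extremal weights `u`, every term of the difference is `≤ 0`.
  have hdiff : HasSum (fun i => (lam i - lam r) * (t i - u i)) (a - ∑ i ∈ range r, lam i) := by
    have := (hlt.sub hlu).sub ((ht.sub hu).mul_left (lam r))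
    rw [sub_self, mul_zero, sub_zero] at this
    exact this.congr_fun fun i => by ring
  have hterm : ∀ i, (lam i - lam r) * (t i - u i) ≤ 0 := by
    intro i
    by_cases hi : i < r
    · simp only [u, if_pos hi]
      exact mul_nonpos_of_nonneg_of_nonpos (sub_nonneg.2 (hlam hi.le)) (sub_nonpos.2 (ht1 i))
    · simp only [u, if_neg hi, sub_zero]
      exact mul_nonpos_of_nonpos_of_nonneg (sub_nonpos.2 (hlam (not_lt.1 hi))) (ht0 i)
  linarith [hasSum_le hterm hdiff hasSum_zero]

section

variable {X : Type*} [NormedAddCommGroup X] [InnerProductSpace ℝ X]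

namespace HilbertBasis

variable {κ ι : Type*} [Fintype ι]

theorem hasSum_sum_inner_sq (b : HilbertBasis κ ℝ X) (s : ι → X) :
    HasSum (fun i => ∑ k, ⟪s k, b i⟫ ^ 2) (∑ k, ‖s k‖ ^ 2) :=
  hasSum_sum fun k _ => by
    simpa [← sq, real_inner_comm, real_inner_self_eq_norm_sq] using
      b.hasSum_inner_mul_inner (s k) (s k)

theorem hasSum_eigenvalue_mul_inner_sq (b : HilbertBasis κ ℝ X) {T : X → X} {lam : κ → ℝ}
    (hT : ∀ v w, ⟪T v, w⟫ = ⟪v, T w⟫) (heig : ∀ i, T (b i) = lam i • b i) (v : X) :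
    HasSum (fun i => lam i * ⟪v, b i⟫ ^ 2) ⟪T v, v⟫ := by
  refine (b.hasSum_inner_mul_inner (T v) v).congr_fun fun i => ?_
  rw [hT, heig, real_inner_smul_right, real_inner_comm v (b i), sq, mul_assoc]

/-- Ky Fan's maximum principle. -/
theorem sum_inner_apply_self_le_sum_range (b : HilbertBasis ℕ ℝ X) {T : X → X} {lam : ℕ → ℝ}
    (hT : ∀ v w, ⟪T v, w⟫ = ⟪v, T w⟫) (heig : ∀ i, T (b i) = lam i • b i)
    (hlam : Antitone lam) {φ : ι → X} (hφ : Orthonormal ℝ φ) :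
    ∑ l, ⟪T (φ l), φ l⟫ ≤ ∑ i ∈ range (Fintype.card ι), lam i := by
  refine hasSum_mul_le_sum_range_of_antitone (t := fun i => ∑ l, ⟪φ l, b i⟫ ^ 2) hlam
    (fun i => sum_nonneg fun l _ => sq_nonneg _) (fun i => ?_) ?_ ?_
  · simpa [b.orthonormal.1 i, real_inner_comm] using
      hφ.sum_inner_products_le (b i) (s := univ)
  · simpa [hφ.1] using b.hasSum_sum_inner_sq φ
  · simpa [mul_sum] using hasSum_sum fun l _ => b.hasSum_eigenvalue_mul_inner_sq hT heig (φ l)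

end HilbertBasis

theorem Orthonormal.norm_sub_sum_inner_smul_sq {ι : Type*} [Fintype ι] {φ : ι → X}
    (hφ : Orthonormal ℝ φ) (x : X) :
    ‖x - ∑ l, ⟪x, φ l⟫ • φ l‖ ^ 2 = ‖x‖ ^ 2 - ∑ l, ⟪x, φ l⟫ ^ 2 := by
  have hcross : ⟪x, ∑ l, ⟪x, φ l⟫ • φ l⟫ = ∑ l, ⟪x, φ l⟫ ^ 2 := by
    simp [inner_sum, real_inner_smul_right, sq]
  have hproj : ‖∑ l, ⟪x, φ l⟫ • φ l‖ ^ 2 = ∑ l, ⟪x, φ l⟫ ^ 2 := by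
    rw [← real_inner_self_eq_norm_sq, hφ.inner_sum]
    simp [sq]
  rw [norm_sub_sq_real, hcross, hproj]
  ring

section Covariance

variable {ι : Type*} [Fintype ι] (s : ι → X)

def covarianceOp (v : X) : X := ∑ k, ⟪v, s k⟫ • s k

theorem inner_covarianceOp (v w : X) : ⟪covarianceOp s v, w⟫ = ∑ k, ⟪v, s k⟫ * ⟪s k, w⟫ := by
  simp [covarianceOp, sum_inner, real_inner_smul_left]

theorem covarianceOp_symm (v w : X) : ⟪covarianceOp s v, w⟫ = ⟪v, covarianceOp s w⟫ := by
  rw [real_inner_comm (covarianceOp s w) v, inner_covarianceOp, inner_covarianceOp]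
  exact sum_congr rfl fun k _ => by rw [real_inner_comm v, real_inner_comm (s k) w, mul_comm]

theorem inner_covarianceOp_self (v : X) : ⟪covarianceOp s v, v⟫ = ∑ k, ⟪s k, v⟫ ^ 2 := by
  rw [inner_covarianceOp]
  exact sum_congr rfl fun k _ => by rw [real_inner_comm v, sq]

theorem sum_norm_sub_sum_inner_smul_sq {ρ : Type*} [Fintype ρ] {φ : ρ → X}
    (hφ : Orthonormal ℝ φ) :
    ∑ k, ‖s k - ∑ l, ⟪s k, φ l⟫ • φ l‖ ^ 2
      = ∑ k, ‖s k‖ ^ 2 - ∑ l, ⟪covarianceOp s (φ l), φ l⟫ := by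
  simp only [hφ.norm_sub_sum_inner_smul_sq, inner_covarianceOp_self, sum_sub_distrib]
  rw [sum_comm]

theorem hasSum_eigenvalues_covarianceOp {κ : Type*} (b : HilbertBasis κ ℝ X) {lam : κ → ℝ}
    (heig : ∀ i, covarianceOp s (b i) = lam i • b i) :
    HasSum lam (∑ k, ‖s k‖ ^ 2) := by
  refine (b.hasSum_sum_inner_sq s).congr_fun fun i => ?_
  rw [← inner_covarianceOp_self, heig, real_inner_smul_left, real_inner_self_eq_norm_sq,
    b.orthonormal.1 i, one_pow, mul_one]

end Covariance

end

theorem pod_optimality_general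
    {X : Type*} [NormedAddCommGroup X] [InnerProductSpace ℝ X]
    {K : ℕ} (s : Fin K → X)
    (C : X → X) (hC : ∀ v, C v = ∑ k, ⟪v, s k⟫ • s k)
    (ψ : HilbertBasis ℕ ℝ X) (lam : ℕ → ℝ)
    (heig : ∀ i, C (ψ i) = lam i • ψ i)
    (hmono : Antitone lam)
    (r : ℕ) :
    (∀ φ : Fin r → X, Orthonormal ℝ φ →
      ∑ k, ‖s k - ∑ l, ⟪s k, φ l⟫ • φ l‖ ^ 2 ≥ ∑' i : ℕ, lam (r + i)) ∧
    (∑ k, ‖s k - ∑ l : Fin r, ⟪s k, ψ (l : ℕ)⟫ • ψ (l : ℕ)‖ ^ 2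
      = ∑' i : ℕ, lam (r + i)) := by
  obtain rfl : C = covarianceOp s := funext hC
  have htail : ∑' i, lam (r + i) = ∑ k, ‖s k‖ ^ 2 - ∑ i ∈ range r, lam i := by
    simpa [add_comm] using
      ((hasSum_nat_add_iff' r).2 (hasSum_eigenvalues_covarianceOp s ψ heig)).tsum_eq
  refine ⟨fun φ hφ => ?_, ?_⟩
  · have hkyfan := ψ.sum_inner_apply_self_le_sum_range (covarianceOp_symm s) heig hmono hφ
    rw [Fintype.card_fin] at hkyfan
    rw [sum_norm_sub_sum_inner_smul_sq s hφ, htail]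
    linarith
  · have hψ : Orthonormal ℝ fun l : Fin r => ψ l := ψ.orthonormal.comp _ Fin.val_injective
    rw [sum_norm_sub_sum_inner_smul_sq s hψ, htail, ← Fin.sum_univ_eq_sum_range]
    simp [heig, real_inner_smul_left, ψ.orthonormal.1]

/-- POD optimality. If `C` is the empirical covariance operator of
snapshots in a separable Hilbert space, with Hilbert (orthonormal) eigenbasis
`ψᵢ` and non-increasing non-negative eigenvalues `λᵢ`, then for any orthonormal
family `φ₁,…,φ_r` the total snapshot projection error is at least the tail
eigenvalue sum `Σ_{i>r} λᵢ`, and equality is attained by the POD basis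
`φ_l = ψ_l`. -/
theorem pod_optimality
    {X : Type*} [NormedAddCommGroup X] [InnerProductSpace ℝ X] [CompleteSpace X]
    {K : ℕ} (s : Fin K → X)
    (C : X → X) (hC : ∀ v, C v = ∑ k, ⟪v, s k⟫ • s k)
    (ψ : HilbertBasis ℕ ℝ X) (lam : ℕ → ℝ)
    (heig : ∀ i, C (ψ i) = lam i • ψ i)
    (hmono : Antitone lam) (hnonneg : ∀ i, 0 ≤ lam i)
    (r : ℕ) :
    (∀ φ : Fin r → X, Orthonormal ℝ φ →
      ∑ k, ‖s k - ∑ l, ⟪s k, φ l⟫ • φ l‖ ^ 2 ≥ ∑' i : ℕ, lam (r + i)) ∧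
    (∑ k, ‖s k - ∑ l : Fin r, ⟪s k, ψ (l : ℕ)⟫ • ψ (l : ℕ)‖ ^ 2
      = ∑' i : ℕ, lam (r + i)) :=
  pod_optimality_general s C hC ψ lam heig hmono r
end

section
/- The minimum-Frobenius-norm solution of the Operator Inference least-squares problem has a symmetric quadratic operator: among all pairs (A, H) minimizing Σ_k ‖A ŝ⁽ᵏ⁾ + H(ŝ⁽ᵏ⁾ ⊗ ŝ⁽ᵏ⁾) − ṡ⁽ᵏ⁾‖², any pair additionally minimizing ‖A‖_F² + ‖H‖_F² satisfies h_{l,ij} = h_{l,ji} for all l, i, j. -/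
/-- any minimum-Frobenius-norm solution of the Operator Inference
least-squares problem has a symmetric quadratic operator. -/
theorem opinf_min_norm_solution_symmetric
    {r K : ℕ} (shat sdot : Fin K → Fin r → ℝ)
    (J : Matrix (Fin r) (Fin r) ℝ → (Fin r → Fin r → Fin r → ℝ) → ℝ)
    (hJ : ∀ A H, J A H = ∑ k, ∑ l,
      (∑ i, A l i * shat k i + ∑ i, ∑ j, H l i j * shat k i * shat k j
        - sdot k l) ^ 2)
    (A : Matrix (Fin r) (Fin r) ℝ) (H : Fin r → Fin r → Fin r → ℝ)
    (hmin : ∀ (A' : Matrix (Fin r) (Fin r) ℝ) (H' : Fin r → Fin r → Fin r → ℝ),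
      J A H ≤ J A' H')
    (hnorm : ∀ (A' : Matrix (Fin r) (Fin r) ℝ) (H' : Fin r → Fin r → Fin r → ℝ),
      J A' H' = J A H →
      ∑ l, ∑ i, (A l i) ^ 2 + ∑ l, ∑ i, ∑ j, (H l i j) ^ 2
        ≤ ∑ l, ∑ i, (A' l i) ^ 2 + ∑ l, ∑ i, ∑ j, (H' l i j) ^ 2) :
    ∀ l i j, H l i j = H l j i := by
  set Hs : Fin r → Fin r → Fin r → ℝ := fun l i j => (H l i j + H l j i) / 2 with hHs
  -- the residuals are unchanged under symmetrization
  have hres : ∀ k l, (∑ i, ∑ j, Hs l i j * shat k i * shat k j)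
      = ∑ i, ∑ j, H l i j * shat k i * shat k j := by
    intro k l
    have swap : (∑ i, ∑ j, H l j i * shat k i * shat k j)
        = ∑ i, ∑ j, H l i j * shat k i * shat k j := by
      rw [Finset.sum_comm]
      exact Finset.sum_congr rfl fun i _ => Finset.sum_congr rfl fun j _ => by ring
    have expand : (∑ i, ∑ j, Hs l i j * shat k i * shat k j)
        = (∑ i, ∑ j, H l i j * shat k i * shat k j) / 2
          + (∑ i, ∑ j, H l j i * shat k i * shat k j) / 2 := by
      simp only [Finset.sum_div, ← Finset.sum_add_distrib]
      refine Finset.sum_congr rfl fun i _ => Finset.sum_congr rfl fun j _ => ?_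
      simp only [hHs]; ring
    rw [expand, swap]; ring
  have hJeq : J A Hs = J A H := by
    rw [hJ, hJ]
    refine Finset.sum_congr rfl fun k _ => Finset.sum_congr rfl fun l _ => ?_
    rw [hres k l]
  have hle := hnorm A Hs hJeq
  have hle' : (∑ l, ∑ i, ∑ j, (H l i j) ^ 2) ≤ ∑ l, ∑ i, ∑ j, (Hs l i j) ^ 2 := by
    linarith
  -- key identity: sum of squared antisymmetric parts
  have key : (∑ l, ∑ i, ∑ j, ((H l i j - H l j i) ^ 2 / 4 + (Hs l i j) ^ 2))
      = ∑ l, ∑ i, ∑ j, (H l i j) ^ 2 := by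
    refine Finset.sum_congr rfl fun l _ => ?_
    have step : (∑ i, ∑ j, ((H l i j - H l j i) ^ 2 / 4 + (Hs l i j) ^ 2))
        = ∑ i, ∑ j, ((H l i j) ^ 2 / 2 + (H l j i) ^ 2 / 2) := by
      refine Finset.sum_congr rfl fun i _ => Finset.sum_congr rfl fun j _ => ?_
      simp only [hHs]; ring
    have swap2 : (∑ i, ∑ j, (H l j i) ^ 2 / 2) = ∑ i, ∑ j, (H l i j) ^ 2 / 2 :=
      Finset.sum_comm
    rw [step]
    rw [show (∑ i, ∑ j, ((H l i j) ^ 2 / 2 + (H l j i) ^ 2 / 2))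
        = (∑ i, ∑ j, (H l i j) ^ 2 / 2) + ∑ i, ∑ j, (H l j i) ^ 2 / 2 by
      rw [← Finset.sum_add_distrib]
      exact Finset.sum_congr rfl fun i _ => by rw [← Finset.sum_add_distrib]]
    rw [swap2, ← Finset.sum_add_distrib]
    refine Finset.sum_congr rfl fun i _ => ?_
    rw [← Finset.sum_add_distrib]
    exact Finset.sum_congr rfl fun j _ => by ring
  have split : (∑ l, ∑ i, ∑ j, ((H l i j - H l j i) ^ 2 / 4 + (Hs l i j) ^ 2))
      = (∑ l, ∑ i, ∑ j, (H l i j - H l j i) ^ 2 / 4)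
        + ∑ l, ∑ i, ∑ j, (Hs l i j) ^ 2 := by
    rw [← Finset.sum_add_distrib]
    refine Finset.sum_congr rfl fun l _ => ?_
    rw [← Finset.sum_add_distrib]
    refine Finset.sum_congr rfl fun i _ => ?_
    rw [← Finset.sum_add_distrib]
  have hsum0 : (∑ l, ∑ i, ∑ j, (H l i j - H l j i) ^ 2 / 4) ≤ 0 := by
    rw [split] at key; linarith
  have hnn : ∀ l ∈ Finset.univ, (0:ℝ) ≤ ∑ i, ∑ j, (H l i j - H l j i) ^ 2 / 4 :=
    fun l _ => Finset.sum_nonneg fun i _ => Finset.sum_nonneg fun j _ => by positivity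
  have hzero : (∑ l, ∑ i, ∑ j, (H l i j - H l j i) ^ 2 / 4) = 0 :=
    le_antisymm hsum0 (Finset.sum_nonneg hnn)
  intro l i j
  have h1 := (Finset.sum_eq_zero_iff_of_nonneg hnn).mp hzero l (Finset.mem_univ l)
  have h2 := (Finset.sum_eq_zero_iff_of_nonneg
    (fun i _ => Finset.sum_nonneg fun j _ => by positivity)).mp h1 i (Finset.mem_univ i)
  have h3 := (Finset.sum_eq_zero_iff_of_nonneg
    (fun j _ => by positivity)).mp h2 j (Finset.mem_univ j)
  have : (H l i j - H l j i) ^ 2 = 0 := by linarith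
  have := pow_eq_zero_iff (n := 2) (by norm_num) |>.mp this
  linarith
end
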